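/- arXiv:1312.6076 — 3 statements merged into one kernel-verified Lean document; each statement's English description precedes it below -/
import Mathlib

section
/- (Stroock–Varopoulos inequality, bilinear-form formulation.) Let d ≥ 1, s ∈ (0,1) and q > 1. For every nonnegative measurable function v : ℝ^d → ℝ one has ∬_{ℝ^d×ℝ^d} (v(x)-v(y))(v(x)^{q-1}-v(y)^{q-1}) |x-y|^{-(d+2s)} dx dy ≥ (4(q-1)/q²) ∬_{ℝ^d×ℝ^d} (v(x)^{q/2}-v(y)^{q/2})² |x-y|^{-(d+2s)} dx dy, where both double integrals have nonnegative integrands and take values in [0,∞]. (This expresses the inequality ∫ v^{q-1} (-Δ)^s(v) dx ≥ (4(q-1)/q²) ∥(-Δ)^{s/2}(v^{q/2})∥_{L²}² through the Gagliardo bilinear form representation of the fractional Laplacian.) -/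
/-!
For `0 ≤ b ≤ a`, Cauchy–Schwarz applied to `t ↦ t ^ (q/2 - 1)` on `[b, a]` gives
`((a^{q/2} - b^{q/2}) / (q/2))² ≤ (a - b) (a^{q-1} - b^{q-1}) / (q - 1)`,
which is the Stroock–Varopoulos inequality for the two values `a = v x`, `b = v y`;
multiplying by the kernel and integrating gives the inequality of the double integrals.
-/

open MeasureTheory Filter Topology Set
open scoped ENNReal NNReal

noncomputable section

/-- `d`-dimensional Euclidean space. -/
abbrev Ed (d : ℕ) : Type := EuclideanSpace ℝ (Fin d)

/-- An admissible weight with exponents `(γ₀, γ)` and constants `0 < c < C`: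
a measurable, everywhere positive function comparable to `|x|^{-γ₀}` near the
origin and to `|x|^{-γ}` at infinity. -/
def AdmissibleWeight (d : ℕ) (ρ : Ed d → ℝ) (γ₀ γ c C : ℝ) : Prop :=
  0 < c ∧ c < C ∧ Measurable ρ ∧ (∀ x, 0 < ρ x) ∧
    (∀ᵐ x ∂(volume : Measure (Ed d)), ‖x‖ ≤ 1 →
      c * ‖x‖ ^ (-γ₀) ≤ ρ x ∧ ρ x ≤ C * ‖x‖ ^ (-γ₀)) ∧
    (∀ᵐ x ∂(volume : Measure (Ed d)), 1 < ‖x‖ →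
      c * ‖x‖ ^ (-γ) ≤ ρ x ∧ ρ x ≤ C * ‖x‖ ^ (-γ))

/-- The Gagliardo bilinear form `E(v,w)` of order `s` with normalizing constant `κ`. -/
def gagliardoE (d : ℕ) (s κ : ℝ) (v w : Ed d → ℝ) : ℝ :=
  (κ / 2) * ∫ p : Ed d × Ed d,
    (v p.1 - v p.2) * (w p.1 - w p.2) / ‖p.1 - p.2‖ ^ ((d : ℝ) + 2 * s)

/-- The squared homogeneous fractional Sobolev seminorm `‖v‖_{Ḣ^s}² = E(v,v)`,
with values in `[0,∞]`. -/
def gagliardoSq (d : ℕ) (s κ : ℝ) (v : Ed d → ℝ) : ℝ≥0∞ :=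
  ENNReal.ofReal (κ / 2) * ∫⁻ p : Ed d × Ed d,
    ENNReal.ofReal ((v p.1 - v p.2) ^ 2 / ‖p.1 - p.2‖ ^ ((d : ℝ) + 2 * s))

/-- The weighted `L^p` norm `‖v‖_{p,ρ}`, valued in `[0,∞]`. -/
def wnorm (d : ℕ) (p : ℝ) (ρ v : Ed d → ℝ) : ℝ≥0∞ :=
  (∫⁻ x : Ed d, ENNReal.ofReal (|v x| ^ p * ρ x)) ^ (1 / p)

/-- Smooth compactly supported test functions on `ℝ^d × (0,∞)`. -/
def IsTestFn (d : ℕ) (φ : Ed d × ℝ → ℝ) : Prop :=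
  ContDiff ℝ (⊤ : ℕ∞) φ ∧ HasCompactSupport φ ∧ tsupport φ ⊆ univ ×ˢ Ioi (0 : ℝ)

/-- Conditions (i)–(iii) of the definition of weak solution of
`ρ u_t + (-Δ)^s(u^m) = 0` on `ℝ^d × (0,∞)` (no initial datum prescribed). -/
structure WeakSolCore (d : ℕ) (s m κ : ℝ) (ρ : Ed d → ℝ) (u : Ed d → ℝ → ℝ) : Prop where
  measurable : Measurable (Function.uncurry u)
  nonneg : ∀ x t, 0 ≤ u x t
  /-- (i), first part: `ess sup_{t>0} ∫ u(·,t) ρ < ∞`. -/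
  massBound : ∃ M : ℝ, ∀ᵐ t ∂(volume.restrict (Ioi (0 : ℝ))),
    Integrable (fun x : Ed d => u x t * ρ x) ∧ (∫ x : Ed d, u x t * ρ x) ≤ M
  /-- (i), second part: `u` essentially bounded on `ℝ^d × (τ,∞)` for every `τ > 0`. -/
  essBdd : ∀ τ : ℝ, 0 < τ → ∃ B : ℝ,
    ∀ᵐ p ∂(volume : Measure (Ed d × ℝ)), τ < p.2 → u p.1 p.2 ≤ B
  /-- (ii), first part: `‖u^m(·,t)‖_{Ḣ^s} < ∞` for a.e. `t > 0`. -/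
  energyFinite : ∀ᵐ t ∂(volume.restrict (Ioi (0 : ℝ))),
    gagliardoSq d s κ (fun x => u x t ^ m) < ⊤
  /-- (ii), second part: `t ↦ ‖u^m(·,t)‖_{Ḣ^s}²` locally integrable on `(0,∞)`. -/
  energyLocInt : ∀ t₁ t₂ : ℝ, 0 < t₁ → t₁ < t₂ →
    (∫⁻ t in Ioc t₁ t₂, gagliardoSq d s κ (fun x => u x t ^ m)) ≠ ⊤
  /-- (iii): the weak formulation against all test functions. -/
  weakForm : ∀ φ : Ed d × ℝ → ℝ, IsTestFn d φ →
    -(∫ t in Ioi (0 : ℝ), ∫ x : Ed d, u x t * deriv (fun τ => φ (x, τ)) t * ρ x)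
      + ∫ t in Ioi (0 : ℝ),
          gagliardoE d s κ (fun x => u x t ^ m) (fun x => φ (x, t)) = 0

/-- Condition (iv): `ρ(·)u(·,t) → μ` as `t → 0` essentially, tested against all
bounded continuous functions. -/
def HasInitialTrace (d : ℕ) (ρ : Ed d → ℝ) (u : Ed d → ℝ → ℝ)
    (μ : Measure (Ed d)) : Prop :=
  ∃ N : Set ℝ, volume N = 0 ∧
    ∀ φ : Ed d → ℝ, Continuous φ → (∃ B : ℝ, ∀ x, |φ x| ≤ B) →
      Tendsto (fun t => ∫ x : Ed d, φ x * (u x t * ρ x))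
        (𝓝[(Ioi (0 : ℝ)) \ N] 0) (𝓝 (∫ x, φ x ∂μ))

/-- Weak solution of the Cauchy problem with initial datum `μ`. -/
def IsWeakSolution (d : ℕ) (s m κ : ℝ) (ρ : Ed d → ℝ) (μ : Measure (Ed d))
    (u : Ed d → ℝ → ℝ) : Prop :=
  WeakSolCore d s m κ ρ u ∧ HasInitialTrace d ρ u μ

theorem sq_intervalIntegral_le_mul_intervalIntegral_sq {f : ℝ → ℝ} {a b : ℝ} (hab : a ≤ b)
    (hf : IntervalIntegrable f volume a b) (hf2 : IntervalIntegrable (fun t => f t ^ 2) volume a b) :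
    (∫ t in a..b, f t) ^ 2 ≤ (b - a) * ∫ t in a..b, f t ^ 2 := by
  -- `x ↦ ∫ (x - f)²` is a nonnegative quadratic polynomial, so its discriminant is nonpositive.
  have hquad : ∀ x : ℝ, 0 ≤ (b - a) * (x * x) + (-2 * ∫ t in a..b, f t) * x +
      ∫ t in a..b, f t ^ 2 := fun x => by
    have hexpand : ∫ t in a..b, (x - f t) ^ 2 =
        (b - a) * (x * x) + (-2 * ∫ t in a..b, f t) * x + ∫ t in a..b, f t ^ 2 := by
      simp_rw [sub_sq, mul_assoc]
      rw [intervalIntegral.integral_add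
          (intervalIntegrable_const.sub ((hf.const_mul _).const_mul _)) hf2,
        intervalIntegral.integral_sub intervalIntegrable_const ((hf.const_mul _).const_mul _),
        intervalIntegral.integral_const, intervalIntegral.integral_const_mul,
        intervalIntegral.integral_const_mul, smul_eq_mul]
      ring
    exact hexpand ▸ intervalIntegral.integral_nonneg hab fun t _ => sq_nonneg _
  have := discrim_le_zero hquad
  rw [discrim] at this
  nlinarith

theorem stroock_varopoulos_pointwise {q a b : ℝ} (hq : 1 < q)
    (ha : 0 ≤ a) (hb : 0 ≤ b) :
    4 * (q - 1) / q ^ 2 * (a ^ (q / 2) - b ^ (q / 2)) ^ 2 ≤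
      (a - b) * (a ^ (q - 1) - b ^ (q - 1)) := by
  wlog hba : b ≤ a generalizing a b
  · convert this hb ha (le_of_not_ge hba) using 1 <;> ring
  have hsq : EqOn (fun t : ℝ => (t ^ (q / 2 - 1)) ^ 2) (fun t => t ^ (q - 2)) (uIcc b a) :=
    fun t ht => by
      have ht0 : 0 ≤ t := hb.trans (uIcc_of_le hba ▸ ht).1
      dsimp only
      rw [← Real.rpow_natCast, ← Real.rpow_mul ht0]
      ring_nf
  have hcs := sq_intervalIntegral_le_mul_intervalIntegral_sq hba
    (intervalIntegral.intervalIntegrable_rpow' (r := q / 2 - 1) (by linarith))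
    ((intervalIntegral.intervalIntegrable_rpow' (r := q - 2) (by linarith)).congr
      (hsq.symm.mono Ioc_subset_Icc_self))
  rw [intervalIntegral.integral_congr hsq, integral_rpow (Or.inl (by linarith)),
    integral_rpow (Or.inl (by linarith)), show q / 2 - 1 + 1 = q / 2 by ring,
    show q - 2 + 1 = q - 1 by ring] at hcs
  have hq1 : q - 1 ≠ 0 := by linarith
  calc 4 * (q - 1) / q ^ 2 * (a ^ (q / 2) - b ^ (q / 2)) ^ 2
      = (q - 1) * ((a ^ (q / 2) - b ^ (q / 2)) / (q / 2)) ^ 2 := by field_simp; ring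
    _ ≤ (q - 1) * ((a - b) * ((a ^ (q - 1) - b ^ (q - 1)) / (q - 1))) := by gcongr
    _ = (a - b) * (a ^ (q - 1) - b ^ (q - 1)) := by field_simp

theorem stroock_varopoulos_general
    (d : ℕ) (s q : ℝ) (hq : 1 < q)
    (v : Ed d → ℝ) (hv : ∀ x, 0 ≤ v x) :
    ENNReal.ofReal (4 * (q - 1) / q ^ 2) *
      ∫⁻ p : Ed d × Ed d, ENNReal.ofReal
        ((v p.1 ^ (q / 2) - v p.2 ^ (q / 2)) ^ 2 / ‖p.1 - p.2‖ ^ ((d : ℝ) + 2 * s))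
      ≤ ∫⁻ p : Ed d × Ed d, ENNReal.ofReal
        ((v p.1 - v p.2) * (v p.1 ^ (q - 1) - v p.2 ^ (q - 1)) /
          ‖p.1 - p.2‖ ^ ((d : ℝ) + 2 * s)) := by
  rw [← lintegral_const_mul' _ _ ENNReal.ofReal_ne_top]
  refine lintegral_mono fun p => ?_
  have hconst : 0 ≤ 4 * (q - 1) / q ^ 2 := div_nonneg (by linarith) (sq_nonneg q)
  rw [← ENNReal.ofReal_mul hconst, mul_div_assoc']
  refine ENNReal.ofReal_le_ofReal (div_le_div_of_nonneg_right ?_ (by positivity))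
  exact stroock_varopoulos_pointwise hq (hv p.1) (hv p.2)

/-- **Stroock–Varopoulos inequality** (bilinear form formulation). For every
nonnegative measurable `v : ℝ^d → ℝ` and every `q > 1`,
`∬ (v(x)-v(y))(v(x)^{q-1}-v(y)^{q-1}) |x-y|^{-(d+2s)}
  ≥ (4(q-1)/q²) ∬ (v(x)^{q/2}-v(y)^{q/2})² |x-y|^{-(d+2s)}`,
both sides being integrals of nonnegative integrands valued in `[0,∞]`. -/
theorem stroock_varopoulos
    (d : ℕ) (hd : 0 < d) (s q : ℝ) (hs0 : 0 < s) (hs1 : s < 1) (hq : 1 < q)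
    (v : Ed d → ℝ) (hv : ∀ x, 0 ≤ v x) (hvm : Measurable v) :
    ENNReal.ofReal (4 * (q - 1) / q ^ 2) *
      ∫⁻ p : Ed d × Ed d, ENNReal.ofReal
        ((v p.1 ^ (q / 2) - v p.2 ^ (q / 2)) ^ 2 / ‖p.1 - p.2‖ ^ ((d : ℝ) + 2 * s))
      ≤ ∫⁻ p : Ed d × Ed d, ENNReal.ofReal
        ((v p.1 - v p.2) * (v p.1 ^ (q - 1) - v p.2 ^ (q - 1)) /
          ‖p.1 - p.2‖ ^ ((d : ℝ) + 2 * s)) :=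
  stroock_varopoulos_general d s q hq v hv
end
end

section
/- Let d be a positive integer and s ∈ (0,1) with d > 2s. Let μ₊ and μ₋ be finite nonnegative Borel measures on ℝ^d such that for Lebesgue-a.e. x ∈ ℝ^d, ∫_{ℝ^d} |x-y|^{2s-d} dμ₋(y) ≤ ∫_{ℝ^d} |x-y|^{2s-d} dμ₊(y) (both integrals taken with values in [0,∞]). Then μ₋(ℝ^d) ≤ μ₊(ℝ^d). (Equivalently: a finite signed Radon measure ν on ℝ^d whose Riesz potential U^ν = I_{2s} * ν is nonnegative almost everywhere satisfies ν(ℝ^d) ≥ 0.) -/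
open MeasureTheory Filter Topology Set
open scoped ENNReal NNReal

noncomputable section

/-!
Test the a.e. inequality of potentials against the indicator of a ball `B(0, R)`. By Tonelli,
`∫ F dν₁ ≤ ∫ F dν₂` for `F y = ∫_{B(0,R)} |x - y|^p dx`. Since the kernel is radially decreasing,
`F` is largest at `y = 0` (bathtub principle: `B(0,R)` and `B(y,R)` have equal volume and the kernel
is `≥ R^p` on one difference and `≤ R^p` on the other), and by homogeneity `F 0 = c R^(p+d)` with
`0 < c < ∞` as long as `-d < p ≤ 0`. On the other hand `F y ≥ c (R - A)^(p+d)` for `|y| < A`, as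
`B(y, R - A) ⊆ B(0, R)`. Hence `((R - A)/R)^(p+d) ν₁(B(0,A)) ≤ ν₂(ℝ^d)`; let `R → ∞`, then `A → ∞`.
-/

open Metric Module

theorem ENNReal.rpow_le_rpow_of_nonpos {x y : ℝ≥0∞} {z : ℝ} (hxy : x ≤ y) (hz : z ≤ 0) :
    y ^ z ≤ x ^ z := by
  rw [← neg_neg z, ENNReal.rpow_neg y, ENNReal.rpow_neg x]
  exact ENNReal.inv_le_inv.2 (ENNReal.rpow_le_rpow hxy (neg_nonneg.2 hz))

namespace MeasureTheory

theorem setLIntegral_le_setLIntegral_of_le_on_sdiff {α : Type*} [MeasurableSpace α]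
    {μ : Measure α} {f : α → ℝ≥0∞} {s t : Set α} {a : ℝ≥0∞}
    (hs : MeasurableSet s) (ht : MeasurableSet t) (hμ : μ s = μ t) (hfin : μ s ≠ ∞)
    (hts : ∀ x ∈ t \ s, f x ≤ a) (hst : ∀ x ∈ s \ t, a ≤ f x) :
    ∫⁻ x in t, f x ∂μ ≤ ∫⁻ x in s, f x ∂μ := by
  have hdiff : μ (t \ s) = μ (s \ t) :=
    (measure_sdiff_symm hs.nullMeasurableSet ht.nullMeasurableSet hμ
      (measure_ne_top_of_subset inter_subset_left hfin)).symm
  rw [← lintegral_inter_add_sdiff f t hs, ← lintegral_inter_add_sdiff f s ht, inter_comm]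
  refine add_le_add le_rfl ?_
  calc ∫⁻ x in t \ s, f x ∂μ ≤ ∫⁻ _ in t \ s, a ∂μ := setLIntegral_mono' (ht.diff hs) hts
    _ = ∫⁻ _ in s \ t, a ∂μ := by rw [setLIntegral_const, setLIntegral_const, hdiff]
    _ ≤ ∫⁻ x in s \ t, f x ∂μ := setLIntegral_mono' (hs.diff ht) hst

theorem lintegral_lintegral_le_of_ae_lintegral_le {α β : Type*} [MeasurableSpace α]
    [MeasurableSpace β] {μ : Measure α} {ν₁ ν₂ : Measure β} [SFinite μ] [SFinite ν₁]
    [SFinite ν₂] {K : α → β → ℝ≥0∞} (hK : Measurable (Function.uncurry K))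
    (h : ∀ᵐ x ∂μ, ∫⁻ y, K x y ∂ν₁ ≤ ∫⁻ y, K x y ∂ν₂) :
    ∫⁻ y, ∫⁻ x, K x y ∂μ ∂ν₁ ≤ ∫⁻ y, ∫⁻ x, K x y ∂μ ∂ν₂ := by
  rw [← lintegral_lintegral_swap hK.aemeasurable, ← lintegral_lintegral_swap hK.aemeasurable]
  exact lintegral_mono_ae h

theorem setLIntegral_ball_comp_sub {G : Type*} [NormedAddCommGroup G] [MeasurableSpace G]
    [MeasurableAdd G] (μ : Measure G) [μ.IsAddRightInvariant] (f : G → ℝ≥0∞) (y : G) (r : ℝ) :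
    ∫⁻ x in ball y r, f (x - y) ∂μ = ∫⁻ x in ball 0 r, f x ∂μ := by
  rw [← (measurePreserving_add_right μ y).setLIntegral_comp_preimage_emb
    (measurableEmbedding_addRight y)]
  have : (· + y) ⁻¹' ball y r = ball (0 : G) r := by
    ext x; simp [dist_eq_norm]
  simp [this]

theorem setLIntegral_ball_eq_mul_comp_smul {E : Type*} [NormedAddCommGroup E] [NormedSpace ℝ E]
    [FiniteDimensional ℝ E] [MeasurableSpace E] [BorelSpace E] (μ : Measure E)
    [μ.IsAddHaarMeasure] (f : E → ℝ≥0∞) {r : ℝ} (hr : 0 < r) :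
    ∫⁻ x in ball 0 r, f x ∂μ =
      ENNReal.ofReal (r ^ finrank ℝ E) * ∫⁻ x in ball 0 1, f (r • x) ∂μ := by
  set e : E ≃ᵐ E := MeasurableEquiv.smul₀ r hr.ne'
  have hpre : e ⁻¹' ball 0 r = ball 0 1 := by
    ext x
    simp [e, norm_smul, abs_of_pos hr, hr]
  have hrd : 0 < r ^ finrank ℝ E := pow_pos hr _
  change _ = _ * ∫⁻ x in ball 0 1, f (e x) ∂μ
  rw [← hpre, ← lintegral_map_equiv, ← e.restrict_map, MeasurableEquiv.coe_smul₀,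
    Measure.map_addHaar_smul μ hr.ne',
    Measure.restrict_smul, lintegral_smul_measure, smul_eq_mul, ← mul_assoc,
    abs_of_pos (inv_pos.2 hrd), ← ENNReal.ofReal_mul hrd.le, mul_inv_cancel₀ hrd.ne',
    ENNReal.ofReal_one, one_mul]

end MeasureTheory

section Riesz

variable {E : Type*} [NormedAddCommGroup E] [MeasurableSpace E]

/-- The Riesz potential with kernel `|x - y|^p` (`p = 2s - d`), without the constant `k_{d,s}`;
for `p < 0` the kernel is `∞` on the diagonal. -/
def rieszPotential (p : ℝ) (ν : Measure E) (x : E) : ℝ≥0∞ :=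
  ∫⁻ y, ENNReal.ofReal ‖x - y‖ ^ p ∂ν

variable [BorelSpace E] (μ : Measure E) [μ.IsAddHaarMeasure] {p : ℝ}

theorem lintegral_ball_one_rpow_norm_ne_zero (hp : p ≤ 0) :
    ∫⁻ x in ball 0 1, ENNReal.ofReal ‖x‖ ^ p ∂μ ≠ 0 := by
  refine ne_bot_of_le_ne_bot (measure_ball_pos μ 0 one_pos).ne' ?_
  rw [← setLIntegral_one]
  refine setLIntegral_mono' measurableSet_ball fun x hx => ?_
  have hx1 : ENNReal.ofReal ‖x‖ ≤ 1 := ENNReal.ofReal_le_one.2 (mem_ball_zero_iff.1 hx).le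
  simpa using ENNReal.rpow_le_rpow_of_nonpos hx1 hp

theorem lintegral_ball_rpow_norm_le_sub {y : E} {A : ℝ} (hy : y ∈ ball 0 A) (r : ℝ) :
    ∫⁻ x in ball 0 r, ENNReal.ofReal ‖x‖ ^ p ∂μ ≤
      ∫⁻ x in ball 0 (r + A), ENNReal.ofReal ‖x - y‖ ^ p ∂μ := by
  rw [← setLIntegral_ball_comp_sub μ (fun x => ENNReal.ofReal ‖x‖ ^ p) y r]
  refine lintegral_mono_set fun x hx => ?_
  rw [mem_ball_zero_iff] at hy ⊢
  rw [mem_ball, dist_eq_norm] at hx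
  calc ‖x‖ ≤ ‖x - y‖ + ‖y‖ := norm_le_norm_sub_add x y
    _ < r + A := add_lt_add hx hy

variable [NormedSpace ℝ E] [FiniteDimensional ℝ E]

theorem lintegral_ball_rpow_norm_eq_mul {r : ℝ} (hr : 0 < r) :
    ∫⁻ x in ball 0 r, ENNReal.ofReal ‖x‖ ^ p ∂μ =
      ENNReal.ofReal r ^ (p + finrank ℝ E) * ∫⁻ x in ball 0 1, ENNReal.ofReal ‖x‖ ^ p ∂μ := by
  have hr' : ENNReal.ofReal r ≠ 0 := by simpa using hr
  calc ∫⁻ x in ball 0 r, ENNReal.ofReal ‖x‖ ^ p ∂μ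
      = ENNReal.ofReal (r ^ finrank ℝ E) *
          ∫⁻ x in ball 0 1, ENNReal.ofReal r ^ p * ENNReal.ofReal ‖x‖ ^ p ∂μ := by
        rw [setLIntegral_ball_eq_mul_comp_smul μ _ hr]
        congr 1
        refine lintegral_congr fun x => ?_
        rw [norm_smul, Real.norm_of_nonneg hr.le, ENNReal.ofReal_mul hr.le,
          ENNReal.mul_rpow_of_ne_top ENNReal.ofReal_ne_top ENNReal.ofReal_ne_top]
    _ = _ := by
        rw [lintegral_const_mul' _ _ (ENNReal.rpow_ne_top_of_ne_zero hr' ENNReal.ofReal_ne_top),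
          ENNReal.rpow_add _ _ hr' ENNReal.ofReal_ne_top, ENNReal.rpow_natCast,
          ENNReal.ofReal_pow hr.le]
        ring

theorem lintegral_ball_rpow_norm_lt_top [Nontrivial E] (hp : -(finrank ℝ E : ℝ) < p) (r : ℝ) :
    ∫⁻ x in ball 0 r, ENNReal.ofReal ‖x‖ ^ p ∂μ < ∞ := by
  have hint : IntegrableOn (fun x : E => ‖x‖ ^ p) (ball 0 r) μ :=
    integrableOn_ball_of_norm_le_rpow finrank_pos (C := 1) (α := -p) (by linarith)
      (ae_of_all _ fun x => by simp [Real.norm_of_nonneg (Real.rpow_nonneg (norm_nonneg x) p)])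
      (measurable_norm.pow_const p).aestronglyMeasurable
  refine lt_of_eq_of_lt (lintegral_congr_ae ?_) hint.2
  filter_upwards [ae_restrict_of_ae (μ.ae_ne 0)] with x hx
  rw [Real.enorm_of_nonneg (Real.rpow_nonneg (norm_nonneg x) p),
    ENNReal.ofReal_rpow_of_pos (norm_pos_iff.2 hx)]

theorem lintegral_ball_rpow_norm_sub_le (hp : p ≤ 0) (y : E) (R : ℝ) :
    ∫⁻ x in ball 0 R, ENNReal.ofReal ‖x - y‖ ^ p ∂μ ≤
      ∫⁻ x in ball 0 R, ENNReal.ofReal ‖x‖ ^ p ∂μ := by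
  rw [← setLIntegral_ball_comp_sub μ (fun x => ENNReal.ofReal ‖x‖ ^ p) y R]
  refine setLIntegral_le_setLIntegral_of_le_on_sdiff measurableSet_ball measurableSet_ball
    (Measure.addHaar_ball_center μ y R) measure_ball_lt_top.ne (a := ENNReal.ofReal R ^ p)
    (fun x hx => ?_) (fun x hx => ?_)
  · have : R ≤ ‖x - y‖ := by simpa [dist_eq_norm] using hx.2
    exact ENNReal.rpow_le_rpow_of_nonpos (ENNReal.ofReal_le_ofReal this) hp
  · have : ‖x - y‖ < R := by simpa [dist_eq_norm] using hx.1
    exact ENNReal.rpow_le_rpow_of_nonpos (ENNReal.ofReal_le_ofReal this.le) hp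

variable {ν₁ ν₂ : Measure E} [SFinite ν₁] [SFinite ν₂]

theorem ofReal_div_rpow_mul_measure_ball_le_of_rieszPotential_le [Nontrivial E]
    (hp0 : p ≤ 0) (hpd : -(finrank ℝ E : ℝ) < p)
    (h : ∀ᵐ x ∂μ, rieszPotential p ν₁ x ≤ rieszPotential p ν₂ x) {r A : ℝ} (hr : 0 < r)
    (hA : 0 ≤ A) :
    ENNReal.ofReal (r / (r + A)) ^ (p + finrank ℝ E) * ν₁ (ball 0 A) ≤ ν₂ univ := by
  set q : ℝ := p + finrank ℝ E
  set c : ℝ≥0∞ := ∫⁻ x in ball 0 1, ENNReal.ofReal ‖x‖ ^ p ∂μ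
  set F : E → ℝ≥0∞ := fun y => ∫⁻ x in ball 0 (r + A), ENNReal.ofReal ‖x - y‖ ^ p ∂μ
  have hrA : 0 < r + A := by linarith
  have hq : 0 ≤ q := by linarith
  have hpair : ∫⁻ y, F y ∂ν₁ ≤ ∫⁻ y, F y ∂ν₂ :=
    lintegral_lintegral_le_of_ae_lintegral_le (by fun_prop) (ae_restrict_of_ae h)
  have hlow : ENNReal.ofReal r ^ q * c * ν₁ (ball 0 A) ≤ ∫⁻ y, F y ∂ν₁ := by
    rw [← lintegral_ball_rpow_norm_eq_mul μ hr, ← setLIntegral_const]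
    exact (setLIntegral_mono' measurableSet_ball fun y hy =>
      lintegral_ball_rpow_norm_le_sub μ hy r).trans (setLIntegral_le_lintegral _ _)
  have hup : ∫⁻ y, F y ∂ν₂ ≤ ENNReal.ofReal (r + A) ^ q * c * ν₂ univ := by
    rw [← lintegral_ball_rpow_norm_eq_mul μ hrA, ← lintegral_const]
    exact lintegral_mono fun y => lintegral_ball_rpow_norm_sub_le μ hp0 y _
  have hK0 : ENNReal.ofReal (r + A) ^ q * c ≠ 0 :=
    mul_ne_zero (ENNReal.rpow_pos (by simpa using hrA) ENNReal.ofReal_ne_top).ne'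
      (lintegral_ball_one_rpow_norm_ne_zero μ hp0)
  have hKtop : ENNReal.ofReal (r + A) ^ q * c ≠ ∞ :=
    ENNReal.mul_ne_top (ENNReal.rpow_ne_top_of_nonneg hq ENNReal.ofReal_ne_top)
      (lintegral_ball_rpow_norm_lt_top μ hpd 1).ne
  have hratio : ENNReal.ofReal (r / (r + A)) ^ q * (ENNReal.ofReal (r + A) ^ q * c) =
      ENNReal.ofReal r ^ q * c := by
    rw [← mul_assoc, ← ENNReal.mul_rpow_of_nonneg _ _ hq,
      ← ENNReal.ofReal_mul (by positivity), div_mul_cancel₀ r hrA.ne']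
  rw [← ENNReal.mul_le_mul_iff_left hK0 hKtop, mul_right_comm, hratio]
  calc ENNReal.ofReal r ^ q * c * ν₁ (ball 0 A) ≤ ENNReal.ofReal (r + A) ^ q * c * ν₂ univ :=
        (hlow.trans hpair).trans hup
    _ = _ := mul_comm _ _

theorem measure_ball_le_of_rieszPotential_le [Nontrivial E] (hp0 : p ≤ 0)
    (hpd : -(finrank ℝ E : ℝ) < p)
    (h : ∀ᵐ x ∂μ, rieszPotential p ν₁ x ≤ rieszPotential p ν₂ x) {A : ℝ} (hA : 0 ≤ A) :
    ν₁ (ball 0 A) ≤ ν₂ univ := by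
  have hratio : Tendsto (fun n : ℕ => ENNReal.ofReal (n / (n + A)) ^ (p + finrank ℝ E))
      atTop (𝓝 1) := by
    have := ((ENNReal.continuous_rpow_const (y := p + finrank ℝ E)).tendsto _).comp
      (ENNReal.tendsto_ofReal (tendsto_natCast_div_add_atTop A))
    simpa [Function.comp_def] using this
  refine le_of_tendsto (by simpa using ENNReal.Tendsto.mul_const hratio (.inl one_ne_zero))
    ((eventually_gt_atTop 0).mono fun n hn => ?_)
  exact ofReal_div_rpow_mul_measure_ball_le_of_rieszPotential_le μ hp0 hpd h
    (Nat.cast_pos.2 hn) hA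

theorem measure_univ_le_of_rieszPotential_le [Nontrivial E] (hp0 : p ≤ 0)
    (hpd : -(finrank ℝ E : ℝ) < p)
    (h : ∀ᵐ x ∂μ, rieszPotential p ν₁ x ≤ rieszPotential p ν₂ x) : ν₁ univ ≤ ν₂ univ := by
  have hunion : ν₁ univ = ⨆ n : ℕ, ν₁ (ball 0 n) := by
    rw [← Monotone.measure_iUnion fun m n hmn => ball_subset_ball (Nat.cast_le.2 hmn),
      iUnion_ball_nat]
  rw [hunion]
  exact iSup_le fun n => measure_ball_le_of_rieszPotential_le μ hp0 hpd h n.cast_nonneg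

end Riesz

theorem mass_le_of_riesz_potential_le_general
    (d : ℕ) (s : ℝ) (hs0 : 0 < s) (hd : 2 * s < (d : ℝ))
    (μp μm : Measure (Ed d)) (hμp : IsFiniteMeasure μp) (hμm : IsFiniteMeasure μm)
    (h : ∀ᵐ x ∂(volume : Measure (Ed d)),
      (∫⁻ y, (ENNReal.ofReal ‖x - y‖) ^ (2 * s - (d : ℝ)) ∂μm)
        ≤ ∫⁻ y, (ENNReal.ofReal ‖x - y‖) ^ (2 * s - (d : ℝ)) ∂μp) :
    μm univ ≤ μp univ := by
  have hd0 : (0 : ℝ) < d := by linarith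
  have : Nonempty (Fin d) := Fin.pos_iff_nonempty.1 (by exact_mod_cast hd0)
  have hdim : finrank ℝ (Ed d) = d := finrank_euclideanSpace_fin
  exact measure_univ_le_of_rieszPotential_le volume (by linarith) (by rw [hdim]; linarith) h

/-- If the Riesz potential (of order `2s`) of the finite nonnegative measure
`μ₋` is a.e. dominated by that of the finite nonnegative measure `μ₊`, then
`μ₋(ℝ^d) ≤ μ₊(ℝ^d)`.  Equivalently, a finite signed Radon measure whose Riesz
potential is a.e. nonnegative has nonnegative total mass. -/
theorem mass_le_of_riesz_potential_le
    (d : ℕ) (s : ℝ) (hs0 : 0 < s) (hs1 : s < 1) (hd : 2 * s < (d : ℝ))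
    (μp μm : Measure (Ed d)) (hμp : IsFiniteMeasure μp) (hμm : IsFiniteMeasure μm)
    (h : ∀ᵐ x ∂(volume : Measure (Ed d)),
      (∫⁻ y, (ENNReal.ofReal ‖x - y‖) ^ (2 * s - (d : ℝ)) ∂μm)
        ≤ ∫⁻ y, (ENNReal.ofReal ‖x - y‖) ^ (2 * s - (d : ℝ)) ∂μp) :
    μm univ ≤ μp univ :=
  mass_le_of_riesz_potential_le_general d s hs0 hd μp μm hμp hμm h
end
end

section
/- Let d be a positive integer and s ∈ (0,1) with d > 2s. Let φ : ℝ^d → ℝ be continuous, Lebesgue integrable, and such that |φ(x)| ≤ A |x|^{-d} for all |x| ≥ 1 and some A > 0. Then the Riesz potential (I_{2s} * φ)(x) := k ∫_{ℝ^d} |x-y|^{2s-d} φ(y) dy is well-defined (the integral converges absolutely for every x), is continuous on ℝ^d, and there exists B > 0 such that |(I_{2s} * φ)(x)| ≤ B |x|^{-(d-2s)} for all |x| ≥ 1, i.e. it decays at least like |x|^{-d+2s} at infinity. -/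
/-!
Write `a = 2s - d ∈ (-d, 0)`. Continuity and the decay bound give `|φ y| ≤ C max(‖y‖, 1)^(-d)`,
in particular `|φ| ≤ C`.

* Continuity: `‖z‖^a = (‖z‖^a - max(‖z‖, 1)^a) + max(‖z‖, 1)^a` is an integrable function
  supported in the unit ball plus a bounded continuous one, and the convolution of an integrable
  function with a bounded continuous one is continuous.
* Decay: for `r = ‖x‖/2`, points `y ∈ ball x r` have `‖y‖ ≥ r`, so `|φ y| ≤ C r^(-d)` there, and
  `∫_{ball 0 r} ‖z‖^a = r^(a+d) ∫_{ball 0 1} ‖z‖^a` by scaling; off that ball `‖x - y‖^a ≤ r^a`.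
  Together `|∫ ‖x - y‖^a φ y dy| ≤ (C ∫_{ball 0 1} ‖z‖^a + ‖φ‖₁) r^a`.
-/

open MeasureTheory Filter Topology Set
open scoped ENNReal NNReal

noncomputable section

open Metric Module Convolution

section Pointwise

variable {E : Type*} [SeminormedAddCommGroup E] {a : ℝ}

theorem abs_norm_sub_rpow_mul_le_indicator_add {x y : E} {r m : ℝ} {φ : E → ℝ} (ha0 : a ≤ 0)
    (hr : 0 < r) (hm : ‖x - y‖ < r → |φ y| ≤ m) :
    |‖x - y‖ ^ a * φ y| ≤
      m * (ball (0 : E) r).indicator (fun z => ‖z‖ ^ a) (x - y) + r ^ a * |φ y| := by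
  rw [abs_mul, abs_of_nonneg (by positivity)]
  by_cases hxy : ‖x - y‖ < r
  · rw [indicator_of_mem (mem_ball_zero_iff.mpr hxy), mul_comm m]
    exact le_add_of_le_of_nonneg (mul_le_mul_of_nonneg_left (hm hxy) (by positivity))
      (by positivity)
  · rw [indicator_of_notMem (by simpa using hxy), mul_zero, zero_add]
    exact mul_le_mul_of_nonneg_right
      (Real.rpow_le_rpow_of_nonpos hr (not_lt.mp hxy) ha0) (abs_nonneg _)

end Pointwise

section Ball

variable {E : Type*} [NormedAddCommGroup E] [NormedSpace ℝ E] [FiniteDimensional ℝ E]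
  [MeasurableSpace E] [BorelSpace E] {μ : Measure E} [μ.IsAddHaarMeasure] {a : ℝ}

theorem integrable_indicator_ball_norm_rpow [Nontrivial E] (ha : -(finrank ℝ E : ℝ) < a)
    (r : ℝ) : Integrable ((ball (0 : E) r).indicator fun z => ‖z‖ ^ a) μ := by
  rw [integrable_indicator_iff measurableSet_ball]
  refine integrableOn_ball_of_norm_le_rpow (C := 1) (α := -a) finrank_pos (by linarith) ?_
    (measurable_norm.pow_const a).aestronglyMeasurable
  filter_upwards with z
  rw [neg_neg, one_mul, Real.norm_of_nonneg (by positivity)]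

theorem setIntegral_ball_norm_rpow {r : ℝ} (hr : 0 < r) :
    ∫ z in ball (0 : E) r, ‖z‖ ^ a ∂μ
      = r ^ (a + finrank ℝ E) * ∫ z in ball (0 : E) 1, ‖z‖ ^ a ∂μ := by
  have h := Measure.setIntegral_comp_smul_of_pos μ (fun z => ‖z‖ ^ a) (ball 0 1) hr
  simp only [smul_unitBall hr.ne', Real.norm_of_nonneg hr.le, norm_smul,
    Real.mul_rpow hr.le (norm_nonneg _), integral_const_mul, smul_eq_mul] at h
  rw [Real.rpow_add hr, Real.rpow_natCast, mul_right_comm, h]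
  field_simp

end Ball

section Bound

variable {E : Type*} [NormedAddCommGroup E] [ProperSpace E]

theorem exists_abs_le_mul_max_norm_one_rpow {φ : E → ℝ} (hφc : Continuous φ) {A p : ℝ}
    (hdecay : ∀ x, 1 ≤ ‖x‖ → |φ x| ≤ A * ‖x‖ ^ (-p)) :
    ∃ C, 0 ≤ C ∧ ∀ y, |φ y| ≤ C * max ‖y‖ 1 ^ (-p) := by
  obtain ⟨M, hM⟩ :=
    (isCompact_closedBall (0 : E) 1).exists_bound_of_continuousOn hφc.continuousOn
  simp only [mem_closedBall_zero_iff, Real.norm_eq_abs] at hM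
  refine ⟨max M A, (abs_nonneg _).trans ((hM 0 (by simp)).trans (le_max_left _ _)), fun y => ?_⟩
  rcases le_total ‖y‖ 1 with hy | hy
  · rw [max_eq_right hy, Real.one_rpow, mul_one]
    exact (hM y hy).trans (le_max_left _ _)
  · rw [max_eq_left hy]
    exact (hdecay y hy).trans (mul_le_mul_of_nonneg_right (le_max_right _ _) (by positivity))

end Bound

section Potential

variable {E : Type*} [NormedAddCommGroup E] [NormedSpace ℝ E] [FiniteDimensional ℝ E]
  [MeasurableSpace E] [BorelSpace E] {μ : Measure E} [μ.IsAddHaarMeasure] [Nontrivial E]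
  {a : ℝ} {φ : E → ℝ}

theorem integrable_norm_sub_rpow_mul (ha : -(finrank ℝ E : ℝ) < a) (ha0 : a ≤ 0)
    {M : ℝ} (hφM : ∀ y, |φ y| ≤ M) (hφ : Integrable φ μ) (x : E) :
    Integrable (fun y => ‖x - y‖ ^ a * φ y) μ := by
  refine Integrable.mono'
    ((((integrable_indicator_ball_norm_rpow ha 1).comp_sub_left x).const_mul M).add
      (hφ.abs.const_mul (1 ^ a))) ?_ ?_
  · exact ((measurable_const.sub measurable_id).norm.pow_const a).aestronglyMeasurable.mul hφ.1
  · filter_upwards with y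
    exact (Real.norm_eq_abs _).trans_le
      (abs_norm_sub_rpow_mul_le_indicator_add ha0 one_pos fun _ => hφM y)

theorem abs_integral_norm_sub_rpow_mul_le (ha : -(finrank ℝ E : ℝ) < a) (ha0 : a ≤ 0)
    {r m : ℝ} (hr : 0 < r) {x : E} (hm : ∀ y, ‖x - y‖ < r → |φ y| ≤ m) (hφ : Integrable φ μ) :
    |∫ y, ‖x - y‖ ^ a * φ y ∂μ| ≤
      m * r ^ (a + finrank ℝ E) * (∫ z in ball (0 : E) 1, ‖z‖ ^ a ∂μ)
        + r ^ a * ∫ y, |φ y| ∂μ := by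
  have hg := (integrable_indicator_ball_norm_rpow (μ := μ) ha r).comp_sub_left x
  calc |∫ y, ‖x - y‖ ^ a * φ y ∂μ|
      ≤ ∫ y, (m * (ball (0 : E) r).indicator (fun z => ‖z‖ ^ a) (x - y) + r ^ a * |φ y|) ∂μ :=
        (Real.norm_eq_abs _).symm.trans_le <|
          norm_integral_le_of_norm_le ((hg.const_mul m).fun_add (hφ.abs.const_mul (r ^ a)))
            (Eventually.of_forall fun y => abs_norm_sub_rpow_mul_le_indicator_add ha0 hr (hm y))
    _ = _ := by
        rw [integral_add (hg.const_mul m) (hφ.abs.const_mul _), integral_const_mul,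
          integral_const_mul, integral_sub_left_eq_self, integral_indicator measurableSet_ball,
          setIntegral_ball_norm_rpow hr, mul_assoc]

theorem abs_integral_norm_sub_rpow_mul_le_of_decay (ha : -(finrank ℝ E : ℝ) < a) (ha0 : a ≤ 0)
    {C : ℝ} (hC0 : 0 ≤ C) (hC : ∀ y, |φ y| ≤ C * max ‖y‖ 1 ^ (-(finrank ℝ E : ℝ)))
    (hφ : Integrable φ μ) {x : E} (hx : x ≠ 0) :
    |∫ y, ‖x - y‖ ^ a * φ y ∂μ| ≤
      (C * (∫ z in ball (0 : E) 1, ‖z‖ ^ a ∂μ) + ∫ y, |φ y| ∂μ) * (‖x‖ / 2) ^ a := by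
  set r := ‖x‖ / 2
  have hr : 0 < r := by positivity
  have hxr : ‖x‖ = 2 * r := by ring
  have hm : ∀ y, ‖x - y‖ < r → |φ y| ≤ C * r ^ (-(finrank ℝ E : ℝ)) := by
    intro y hy
    have hry : r ≤ max ‖y‖ 1 := le_max_of_le_left (by linarith [norm_sub_norm_le x y])
    exact (hC y).trans
      (mul_le_mul_of_nonneg_left (Real.rpow_le_rpow_of_nonpos hr hry (by simp)) hC0)
  have hexp : -(finrank ℝ E : ℝ) + (a + finrank ℝ E) = a := by ring
  calc _ ≤ _ := abs_integral_norm_sub_rpow_mul_le ha ha0 hr hm hφ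
    _ = _ := by rw [mul_assoc C, ← Real.rpow_add hr, hexp]; ring

theorem continuous_integral_norm_sub_rpow_mul (ha : -(finrank ℝ E : ℝ) < a) (ha0 : a ≤ 0)
    {M : ℝ} (hφc : Continuous φ) (hφM : ∀ y, |φ y| ≤ M) (hφ : Integrable φ μ) :
    Continuous fun x => ∫ y, ‖x - y‖ ^ a * φ y ∂μ := by
  set K : E → ℝ := fun z => max ‖z‖ 1 ^ a
  set D : E → ℝ := fun z => ‖z‖ ^ a - K z
  have hK : Continuous K :=
    (continuous_norm.max continuous_const).rpow_const fun z => Or.inl (by positivity)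
  have hK1 : ∀ z, ‖K z‖ ≤ 1 := fun z => by
    rw [Real.norm_of_nonneg (by positivity)]
    exact Real.rpow_le_one_of_one_le_of_nonpos (le_max_right _ _) ha0
  have hD : D = (ball (0 : E) 1).indicator (fun z => ‖z‖ ^ a)
      - (ball (0 : E) 1).indicator 1 := by
    ext z
    by_cases hz : ‖z‖ < 1
    · simp [D, K, hz, max_eq_right hz.le]
    · simp [D, K, hz, max_eq_left (not_lt.mp hz)]
  have hDi : Integrable D μ := hD ▸ (integrable_indicator_ball_norm_rpow ha 1).sub
    ((integrable_indicator_iff measurableSet_ball).2 (integrableOn_const measure_ball_lt_top.ne))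
  have hsplit : (fun x => ∫ y, ‖x - y‖ ^ a * φ y ∂μ)
      = D ⋆[ContinuousLinearMap.mul ℝ ℝ, μ] φ + K ⋆[ContinuousLinearMap.mul ℝ ℝ, μ] φ := by
    ext x
    have hKx : Continuous fun y => K (x - y) := hK.comp (continuous_sub_left x)
    rw [Pi.add_apply, convolution_mul_swap, convolution_mul_swap, ← integral_add
      ((hDi.comp_sub_left x).mul_bdd hφ.1 (Eventually.of_forall hφM))
      (hφ.bdd_mul hKx.aestronglyMeasurable (Eventually.of_forall fun y => hK1 (x - y)))]
    congr 1 with y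
    simp only [D]
    ring
  rw [hsplit]
  exact (BddAbove.continuous_convolution_right_of_integrable _
      ⟨M, by rintro _ ⟨y, rfl⟩; exact hφM y⟩ hDi hφc).add
    (BddAbove.continuous_convolution_left_of_integrable _
      ⟨1, by rintro _ ⟨z, rfl⟩; exact hK1 z⟩ hK hφ)

end Potential

theorem riesz_potential_decay_general
    (d : ℕ) (hd : 0 < d) (s k : ℝ) (hs0 : 0 < s)
    (hds : 2 * s < (d : ℝ))
    (φ : Ed d → ℝ) (hφc : Continuous φ) (hφi : Integrable φ)
    (A : ℝ)
    (hdecay : ∀ x : Ed d, 1 ≤ ‖x‖ → |φ x| ≤ A * ‖x‖ ^ (-(d : ℝ))) :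
    (∀ x : Ed d, Integrable (fun y : Ed d => ‖x - y‖ ^ (2 * s - (d : ℝ)) * φ y)) ∧
    Continuous (fun x : Ed d => k * ∫ y : Ed d, ‖x - y‖ ^ (2 * s - (d : ℝ)) * φ y) ∧
    (∃ B : ℝ, 0 < B ∧ ∀ x : Ed d, 1 ≤ ‖x‖ →
      |k * ∫ y : Ed d, ‖x - y‖ ^ (2 * s - (d : ℝ)) * φ y|
        ≤ B * ‖x‖ ^ (-((d : ℝ) - 2 * s))) := by
  have : Nonempty (Fin d) := ⟨⟨0, hd⟩⟩
  have hn : (finrank ℝ (Ed d) : ℝ) = d := by simp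
  have ha : -(finrank ℝ (Ed d) : ℝ) < 2 * s - d := by rw [hn]; linarith
  have ha0 : 2 * s - (d : ℝ) ≤ 0 := by linarith
  obtain ⟨C, hC0, hC⟩ := exists_abs_le_mul_max_norm_one_rpow hφc hdecay
  rw [← hn] at hC
  have hφC : ∀ y, |φ y| ≤ C := fun y => (hC y).trans <| mul_le_of_le_one_right hC0 <|
    Real.rpow_le_one_of_one_le_of_nonpos (le_max_right _ _) (by simp)
  refine ⟨integrable_norm_sub_rpow_mul ha ha0 hφC hφi,
    continuous_const.mul (continuous_integral_norm_sub_rpow_mul ha ha0 hφc hφC hφi), ?_⟩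
  set B := (C * (∫ z in ball (0 : Ed d) 1, ‖z‖ ^ (2 * s - (d : ℝ))) + ∫ y, |φ y|)
    / 2 ^ (2 * s - (d : ℝ))
  refine ⟨|k| * B + 1, by positivity, fun x hx => ?_⟩
  have hx0 : x ≠ 0 := norm_pos_iff.mp (one_pos.trans_le hx)
  rw [abs_mul, neg_sub]
  calc |k| * |∫ y, ‖x - y‖ ^ (2 * s - (d : ℝ)) * φ y|
      ≤ |k| * ((C * (∫ z in ball (0 : Ed d) 1, ‖z‖ ^ (2 * s - (d : ℝ))) + ∫ y, |φ y|)
          * (‖x‖ / 2) ^ (2 * s - (d : ℝ))) :=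
        mul_le_mul_of_nonneg_left
          (abs_integral_norm_sub_rpow_mul_le_of_decay ha ha0 hC0 hC hφi hx0) (abs_nonneg k)
    _ = |k| * B * ‖x‖ ^ (2 * s - (d : ℝ)) := by
        rw [Real.div_rpow (norm_nonneg x) zero_le_two]; ring
    _ ≤ (|k| * B + 1) * ‖x‖ ^ (2 * s - (d : ℝ)) := by gcongr; linarith

/-- **Riesz potential of a continuous integrable function decaying like
`|x|^{-d}`.** The potential `(I_{2s} * φ)(x) = k ∫ |x-y|^{2s-d} φ(y) dy` is
well-defined (the integral converges absolutely for every `x`), continuous,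
and decays at least like `|x|^{-(d-2s)}` at infinity. -/
theorem riesz_potential_decay
    (d : ℕ) (hd : 0 < d) (s k : ℝ) (hs0 : 0 < s) (hs1 : s < 1)
    (hds : 2 * s < (d : ℝ)) (hk : 0 < k)
    (φ : Ed d → ℝ) (hφc : Continuous φ) (hφi : Integrable φ)
    (A : ℝ) (hA : 0 < A)
    (hdecay : ∀ x : Ed d, 1 ≤ ‖x‖ → |φ x| ≤ A * ‖x‖ ^ (-(d : ℝ))) :
    (∀ x : Ed d, Integrable (fun y : Ed d => ‖x - y‖ ^ (2 * s - (d : ℝ)) * φ y)) ∧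
    Continuous (fun x : Ed d => k * ∫ y : Ed d, ‖x - y‖ ^ (2 * s - (d : ℝ)) * φ y) ∧
    (∃ B : ℝ, 0 < B ∧ ∀ x : Ed d, 1 ≤ ‖x‖ →
      |k * ∫ y : Ed d, ‖x - y‖ ^ (2 * s - (d : ℝ)) * φ y|
        ≤ B * ‖x‖ ^ (-((d : ℝ) - 2 * s))) :=
  riesz_potential_decay_general d hd s k hs0 hds φ hφc hφi A hdecay
end
end
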